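/- For R = I_M, tr(Ψ̃) = M·βc/(β+c), so NMSE = c/(β+c); moreover for general Hermitian PSD R with tr(R) = M and all eigenvalues λ_i ≥ 0, the NMSE tr(Ψ̃)/(Mβ) = (1/M)Σ_i cλ_i/(βλ_i + c) is maximized (among spectra with fixed trace M) when all λ_i = 1, i.e., correlation reduces the MMSE NMSE. -/

import Mathlib

/-!
For `R = I` every matrix in `Ψ̃` is a scalar, and `β - β²/(β + c) = βc/(β + c)`.
For a general spectrum, `f λ = cλ/(βλ + c)` is concave on `λ ≥ 0`, so it lies below its
tangent line at `λ = 1`; summing the tangent line over a spectrum of trace `M` gives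
`M f 1 = M c/(β + c)`.
-/

open Matrix

section ScalarMatrix

variable {n K : Type*} [Fintype n] [DecidableEq n] [Field K]

theorem Matrix.inv_smul_one (a : K) : (a • (1 : Matrix n n K))⁻¹ = a⁻¹ • 1 := by
  rcases eq_or_ne a 0 with rfl | ha
  · simp
  · exact inv_eq_right_inv (by rw [smul_mul_smul, mul_one, mul_inv_cancel₀ ha, one_smul])

theorem Matrix.smul_one_sub_sq_smul_inv_add_smul_one [StarRing K] (β c : K) (h : β + c ≠ 0) :
    β • (1 : Matrix n n K) - β ^ 2 • (1 * (β • 1 + c • 1)⁻¹ * (1 : Matrix n n K)ᴴ)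
      = (β * c / (β + c)) • 1 := by
  rw [← add_smul, inv_smul_one, conjTranspose_one, one_mul, mul_one, smul_smul, ← sub_smul]
  congr 1
  field_simp
  ring

end ScalarMatrix

section TangentLine

variable {β c : ℝ}

theorem mul_div_mul_add_le_tangent (hβ : 0 < β) (hc : 0 < c) {x : ℝ} (hx : 0 ≤ x) :
    c * x / (β * x + c) ≤ c / (β + c) + c ^ 2 / (β + c) ^ 2 * (x - 1) := by
  have hden : 0 < β * x + c := by positivity
  have hgap : (c / (β + c) + c ^ 2 / (β + c) ^ 2 * (x - 1)) * (β * x + c) - c * x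
      = β * c ^ 2 * (x - 1) ^ 2 / (β + c) ^ 2 := by
    field_simp
    ring
  rw [div_le_iff₀ hden]
  nlinarith [show 0 ≤ β * c ^ 2 * (x - 1) ^ 2 / (β + c) ^ 2 by positivity]

theorem sum_mul_div_mul_add_le_card_mul {ι : Type*} [Fintype ι] (hβ : 0 < β) (hc : 0 < c)
    {lam : ι → ℝ} (hpos : ∀ i, 0 ≤ lam i) (hsum : ∑ i, lam i = Fintype.card ι) :
    ∑ i, c * lam i / (β * lam i + c) ≤ Fintype.card ι * (c / (β + c)) :=
  calc ∑ i, c * lam i / (β * lam i + c)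
      ≤ ∑ i, (c / (β + c) + c ^ 2 / (β + c) ^ 2 * (lam i - 1)) :=
        Finset.sum_le_sum fun i _ => mul_div_mul_add_le_tangent hβ hc (hpos i)
    _ = Fintype.card ι * (c / (β + c)) := by
        rw [Finset.sum_add_distrib, ← Finset.mul_sum, Finset.sum_sub_distrib, hsum]
        simp

end TangentLine

/-- For `R = I_M` the error covariance `Ψ̃ = β I − β² I (β I + c I)⁻¹ I` has trace
`M βc/(β+c)`, so the NMSE is `c/(β+c)`; moreover for any spectrum `λ_i ≥ 0` of a
Hermitian PSD correlation matrix with `tr(R) = Σ λ_i = M`, the NMSE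
`(1/M) Σ_i c λ_i/(β λ_i + c)` is at most `c/(β+c)`, i.e. it is maximized when all
`λ_i = 1`; hence correlation reduces the MMSE NMSE. -/
theorem stmt17 (M : ℕ) (hM : 0 < M) (β c : ℝ) (hβ : 0 < β) (hc : 0 < c) :
    ((β : ℂ) • (1 : Matrix (Fin M) (Fin M) ℂ)
        - ((β ^ 2 : ℝ) : ℂ) • ((1 : Matrix (Fin M) (Fin M) ℂ) *
            ((β : ℂ) • (1 : Matrix (Fin M) (Fin M) ℂ)
              + (c : ℂ) • (1 : Matrix (Fin M) (Fin M) ℂ))⁻¹ *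
            (1 : Matrix (Fin M) (Fin M) ℂ)ᴴ)).trace
        = ((M * (β * c / (β + c)) : ℝ) : ℂ) ∧
      (M * (β * c / (β + c))) / (M * β) = c / (β + c) ∧
      ∀ lam : Fin M → ℝ, (∀ i, 0 ≤ lam i) → (∑ i, lam i) = M →
        (1 / M) * ∑ i, c * lam i / (β * lam i + c) ≤ c / (β + c) := by
  have hβc : (β : ℂ) + c ≠ 0 := by exact_mod_cast (add_pos hβ hc).ne'
  have hM' : (0 : ℝ) < M := Nat.cast_pos.mpr hM
  refine ⟨?_, by field_simp, fun lam hpos hsum => ?_⟩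
  · rw [Complex.ofReal_pow, smul_one_sub_sq_smul_inv_add_smul_one _ _ hβc]
    simp [mul_comm]
  · have hcard := sum_mul_div_mul_add_le_card_mul hβ hc hpos (by simpa using hsum)
    rw [Fintype.card_fin] at hcard
    calc 1 / (M : ℝ) * ∑ i, c * lam i / (β * lam i + c)
        ≤ 1 / M * (M * (c / (β + c))) := by gcongr
      _ = c / (β + c) := by field_simp
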